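/- Let F be a field of characteristic ≠ 3 containing a primitive cube root of unity ζ₃. Define Q_i(s) = (((1-ζ₃)/3)(s+ζ₃)^{3i-1} + ((1-ζ₃²)/3)(s+ζ₃²)^{3i-1})/(s-1), P_i(s) = ((s+ζ₃)^{3i} - (s+ζ₃²)^{3i})/(3(ζ₃-ζ₃²)s(s-1)), and R_i(s) = (−1)^i·((2ζ₃+1)/3)·((s+ζ₃²)^{3i-2} − (s+ζ₃)^{3i-2}). Then for all integers i, j, k: Q_i(1−s)·Q_{j+k}(1−s) − Q_j(1−s)·Q_{i+k}(1−s) = 9·(−1)^{i+j+k}·(s−1)²·(s²−s+1)^{3j−1}·P_{i−j}(s)·P_k(s), as an identity of rational functions in F(s). -/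

import Mathlib

/-! Put `a = s + ζ` and `b = s + ζ²`. Since `1 + ζ + ζ² = 0`, the substitution `s ↦ 1 - s` sends
`s + ζ` to `-b` and `s + ζ²` to `-a`, so `Q_n(1 - s) = (-1)ⁿ (p (b³)ⁿ + q (a³)ⁿ)` is a Binet-type
sequence, while `P_n` is proportional to `(a³)ⁿ - (b³)ⁿ`. For any such sequence
`f i * f (j + k) - f j * f (i + k)` factors as `p q (a³b³)ʲ ((b³)ⁱ⁻ʲ - (a³)ⁱ⁻ʲ) ((a³)ᵏ - (b³)ᵏ)`,
and `s² - s + 1 = a b`. The constants agree because `(1 - ζ)(1 - ζ²) = 3` and `(ζ - ζ²)² = -3`. -/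

theorem binet_mul_sub_mul {K : Type*} [Field K] (w p q u v : K) (hw : w ≠ 0) (hu : u ≠ 0)
    (hv : v ≠ 0) (i j k : ℤ) :
    w ^ i * (p * u ^ i + q * v ^ i) * (w ^ (j + k) * (p * u ^ (j + k) + q * v ^ (j + k))) -
        w ^ j * (p * u ^ j + q * v ^ j) * (w ^ (i + k) * (p * u ^ (i + k) + q * v ^ (i + k))) =
      w ^ (i + j + k) * p * q * (u * v) ^ j * (u ^ (i - j) - v ^ (i - j)) * (v ^ k - u ^ k) := by
  simp only [zpow_add₀ hw, zpow_add₀ hu, zpow_add₀ hv, zpow_sub₀ hu, zpow_sub₀ hv, mul_zpow]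
  field_simp
  ring

theorem zpow_three_mul_sub_one {K : Type*} [Field K] {y : K} (hy : y ≠ 0) (n : ℤ) :
    y ^ (3 * n - 1) = (y ^ 3) ^ n / y := by
  rw [zpow_sub_one₀ hy, zpow_mul, zpow_ofNat, div_eq_mul_inv]

theorem neg_zpow_three_mul_sub_one {K : Type*} [Field K] {y : K} (hy : y ≠ 0) (n : ℤ) :
    (-y) ^ (3 * n - 1) = -((-1) ^ n * (y ^ 3) ^ n / y) := by
  rw [zpow_three_mul_sub_one (neg_ne_zero.2 hy), neg_pow, Odd.neg_one_pow (by decide), mul_zpow,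
    div_neg]

namespace IsPrimitiveRoot

variable {K : Type*} [Field K] {ω : K} (hω : IsPrimitiveRoot ω 3)
include hω

theorem sq_add_self_add_one : ω ^ 2 + ω + 1 = 0 := by
  have h := hω.geom_sum_eq_zero (by norm_num)
  simp only [Finset.sum_range_succ, Finset.sum_range_zero, pow_zero, pow_one] at h
  linear_combination h

theorem three_ne_zero : (3 : K) ≠ 0 := by
  simpa using (hω.neZero' (R := K)).out

theorem one_sub_mul_one_sub_sq_eq_three : (1 - ω) * (1 - ω ^ 2) = 3 := by
  linear_combination hω.pow_eq_one - hω.sq_add_self_add_one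

theorem sub_sq_sq_eq_neg_three : (ω - ω ^ 2) ^ 2 = -3 := by
  linear_combination (ω ^ 2 + ω - 1) * hω.sq_add_self_add_one - 4 * hω.pow_eq_one

end IsPrimitiveRoot

section CubeRootFunctions

variable {K : Type*} [Field K]

def cubeRootP (ω x : K) (n : ℤ) : K :=
  ((x + ω) ^ (3 * n) - (x + ω ^ 2) ^ (3 * n)) / (3 * (ω - ω ^ 2) * x * (x - 1))

def cubeRootQ (ω x : K) (n : ℤ) : K :=
  ((1 - ω) / 3 * (x + ω) ^ (3 * n - 1) + (1 - ω ^ 2) / 3 * (x + ω ^ 2) ^ (3 * n - 1)) / (x - 1)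

variable {ω x : K}

theorem cubeRootP_eq (n : ℤ) :
    cubeRootP ω x n =
      (((x + ω) ^ 3) ^ n - ((x + ω ^ 2) ^ 3) ^ n) / (3 * (ω - ω ^ 2) * x * (x - 1)) := by
  rw [cubeRootP, zpow_mul, zpow_mul, zpow_ofNat, zpow_ofNat]

theorem cubeRootQ_one_sub (hω : IsPrimitiveRoot ω 3) (ha : x + ω ≠ 0)
    (hb : x + ω ^ 2 ≠ 0) (n : ℤ) :
    cubeRootQ ω (1 - x) n = (-1) ^ n * ((1 - ω) / (3 * x * (x + ω ^ 2)) * ((x + ω ^ 2) ^ 3) ^ n +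
      (1 - ω ^ 2) / (3 * x * (x + ω)) * ((x + ω) ^ 3) ^ n) := by
  have hω₁ : 1 - x + ω = -(x + ω ^ 2) := by linear_combination hω.sq_add_self_add_one
  have hω₂ : 1 - x + ω ^ 2 = -(x + ω) := by linear_combination hω.sq_add_self_add_one
  rw [cubeRootQ, hω₁, hω₂, sub_sub_cancel_left, neg_zpow_three_mul_sub_one ha,
    neg_zpow_three_mul_sub_one hb]
  field_simp
  ring

theorem cubeRootQ_one_sub_mul_sub_mul (hω : IsPrimitiveRoot ω 3) (hx : x ≠ 0) (hx₁ : x - 1 ≠ 0)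
    (ha : x + ω ≠ 0) (hb : x + ω ^ 2 ≠ 0) (i j k : ℤ) :
    cubeRootQ ω (1 - x) i * cubeRootQ ω (1 - x) (j + k) -
        cubeRootQ ω (1 - x) j * cubeRootQ ω (1 - x) (i + k) =
      9 * (-1) ^ (i + j + k) * (x - 1) ^ 2 * (x ^ 2 - x + 1) ^ (3 * j - 1) *
        cubeRootP ω x (i - j) * cubeRootP ω x k := by
  have hab : x ^ 2 - x + 1 = (x + ω) * (x + ω ^ 2) := by
    linear_combination (-x) * hω.sq_add_self_add_one - hω.pow_eq_one
  simp only [cubeRootQ_one_sub hω ha hb, cubeRootP_eq]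
  rw [binet_mul_sub_mul _ _ _ _ _ (by norm_num) (pow_ne_zero 3 hb) (pow_ne_zero 3 ha), hab,
    zpow_three_mul_sub_one (mul_ne_zero ha hb), mul_pow]
  have h3 := hω.three_ne_zero
  have hd : ω - ω ^ 2 ≠ 0 :=
    ne_of_apply_ne (· ^ 2) (by simpa [hω.sub_sq_sq_eq_neg_three] using h3)
  have hd2 := hω.sub_sq_sq_eq_neg_three
  have hc := hω.one_sub_mul_one_sub_sq_eq_three
  -- keep `ω - ω ^ 2` atomic, so that `field_simp` does not expand its square
  generalize ω - ω ^ 2 = d at hd hd2 ⊢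
  generalize 1 - ω = c₁ at hc ⊢
  generalize 1 - ω ^ 2 = c₂ at hc ⊢
  generalize ((x + ω) ^ 3) = A at *
  generalize ((x + ω ^ 2) ^ 3) = B at *
  field_simp
  linear_combination
    (B * A) ^ j * (B ^ (i - j) - A ^ (i - j)) * (A ^ k - B ^ k) * (d ^ 2 * hc + 3 * hd2)

end CubeRootFunctions

theorem RatFunc.X_add_C_ne_zero {F : Type*} [Field F] (c : F) : (X + C c : RatFunc F) ≠ 0 := by
  rw [← algebraMap_X, ← algebraMap_C, ← map_add]
  exact algebraMap_ne_zero (Polynomial.X_add_C_ne_zero c)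

theorem stmt16_general (F : Type*) [Field F]
    (ζ : F) (hζ : IsPrimitiveRoot ζ 3)
    (P Qm : ℤ → RatFunc F)
    (hP : ∀ i : ℤ, P i =
      ((RatFunc.X + RatFunc.C ζ) ^ (3 * i) - (RatFunc.X + RatFunc.C (ζ ^ 2)) ^ (3 * i)) /
        (3 * (RatFunc.C ζ - RatFunc.C (ζ ^ 2)) * RatFunc.X * (RatFunc.X - 1)))
    (hQm : ∀ i : ℤ, Qm i =
      (RatFunc.C ((1 - ζ) / 3) * ((1 - RatFunc.X) + RatFunc.C ζ) ^ (3 * i - 1) +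
        RatFunc.C ((1 - ζ ^ 2) / 3) * ((1 - RatFunc.X) + RatFunc.C (ζ ^ 2)) ^ (3 * i - 1)) /
        ((1 - RatFunc.X) - 1))
    (i j k : ℤ) :
    Qm i * Qm (j + k) - Qm j * Qm (i + k) =
      9 * (-1 : RatFunc F) ^ (i + j + k) * (RatFunc.X - 1) ^ 2 *
        (RatFunc.X ^ 2 - RatFunc.X + 1) ^ (3 * j - 1) * P (i - j) * P k := by
  open RatFunc in
  have hP_eq : P = cubeRootP (C ζ) X := funext fun n => by
    simp only [hP, cubeRootP, map_pow]
  have hQ_eq : Qm = cubeRootQ (C ζ) (1 - X) := funext fun n => by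
    simp only [hQm, cubeRootQ, map_div₀, map_sub, map_one, map_pow, map_ofNat]
  have hX₁ : (X : RatFunc F) - 1 ≠ 0 := by
    simpa [sub_eq_add_neg] using X_add_C_ne_zero (-1 : F)
  rw [hP_eq, hQ_eq]
  exact cubeRootQ_one_sub_mul_sub_mul (hζ.map_of_injective C.injective) X_ne_zero hX₁
    (X_add_C_ne_zero ζ) (by rw [← map_pow]; exact X_add_C_ne_zero (ζ ^ 2)) i j k

theorem stmt16 (F : Type*) [Field F] (h3 : ringChar F ≠ 3)
    (ζ : F) (hζ : IsPrimitiveRoot ζ 3)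
    (P Qm : ℤ → RatFunc F)
    (hP : ∀ i : ℤ, P i =
      ((RatFunc.X + RatFunc.C ζ) ^ (3 * i) - (RatFunc.X + RatFunc.C (ζ ^ 2)) ^ (3 * i)) /
        (3 * (RatFunc.C ζ - RatFunc.C (ζ ^ 2)) * RatFunc.X * (RatFunc.X - 1)))
    (hQm : ∀ i : ℤ, Qm i =
      (RatFunc.C ((1 - ζ) / 3) * ((1 - RatFunc.X) + RatFunc.C ζ) ^ (3 * i - 1) +
        RatFunc.C ((1 - ζ ^ 2) / 3) * ((1 - RatFunc.X) + RatFunc.C (ζ ^ 2)) ^ (3 * i - 1)) /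
        ((1 - RatFunc.X) - 1))
    (i j k : ℤ) :
    Qm i * Qm (j + k) - Qm j * Qm (i + k) =
      9 * (-1 : RatFunc F) ^ (i + j + k) * (RatFunc.X - 1) ^ 2 *
        (RatFunc.X ^ 2 - RatFunc.X + 1) ^ (3 * j - 1) * P (i - j) * P k :=
  stmt16_general F ζ hζ P Qm hP hQm i j k
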